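/- Closed-loop design separation (sufficiency): let Φx, Φu satisfy (zI - A)Φx - BΦu = I, and let P_c, M_c satisfy [Φx; Φu]·Δ_c = [P_c; M_c] where Δ_c = (zI - A)P_c - B M_c is invertible. Then S = [[Φx, Φx B, Φx(zI - A) - I],[Φu, I + Φu B, Φu(zI - A)],[z⁻¹Δ_c⁻¹, z⁻¹Δ_c⁻¹B, z⁻¹Δ_c⁻¹(zI - A)]] satisfies S(I - R) = I for R = [[A + (1-z)I, B, 0],[0, 0, zM_c],[I, 0, I - zP_c]]. -/

import Mathlib

/-! Put `P = z Pc` and `M = z Mc`, so that `I - R = [[zI - A, -B, 0], [0, I, -M], [-I, 0, P]]`.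
Every row of `S` is a left multiple of `[I, B, zI - A]` plus a constant row, and
`[I, B, zI - A] (I - R) = [0, 0, (zI - A) P - B M] = [0, 0, z Δc]`. Hence the product
`S (I - R)` is the identity as soon as `Φx (z Δc) = P`, `Φu (z Δc) = M` and
`(z⁻¹ Δc⁻¹) (z Δc) = I`. -/

set_option synthInstance.maxHeartbeats 1000000
set_option maxHeartbeats 1000000

noncomputable section

/-- A 3×3 block matrix. -/
def blk3 {n m p α : Type*}
    (M11 : Matrix n n α) (M12 : Matrix n m α) (M13 : Matrix n p α)
    (M21 : Matrix m n α) (M22 : Matrix m m α) (M23 : Matrix m p α)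
    (M31 : Matrix p n α) (M32 : Matrix p m α) (M33 : Matrix p p α) :
    Matrix (n ⊕ (m ⊕ p)) (n ⊕ (m ⊕ p)) α :=
  Matrix.fromBlocks M11 (Matrix.fromCols M12 M13) (Matrix.fromRows M21 M31)
    (Matrix.fromBlocks M22 M23 M32 M33)

section BlockAlgebra

open Matrix

variable {n m p α : Type*}

theorem blk3_mul [Fintype n] [Fintype m] [Fintype p] [Semiring α]
    (A11 : Matrix n n α) (A12 : Matrix n m α) (A13 : Matrix n p α)
    (A21 : Matrix m n α) (A22 : Matrix m m α) (A23 : Matrix m p α)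
    (A31 : Matrix p n α) (A32 : Matrix p m α) (A33 : Matrix p p α)
    (B11 : Matrix n n α) (B12 : Matrix n m α) (B13 : Matrix n p α)
    (B21 : Matrix m n α) (B22 : Matrix m m α) (B23 : Matrix m p α)
    (B31 : Matrix p n α) (B32 : Matrix p m α) (B33 : Matrix p p α) :
    blk3 A11 A12 A13 A21 A22 A23 A31 A32 A33 * blk3 B11 B12 B13 B21 B22 B23 B31 B32 B33
      = blk3 (A11 * B11 + A12 * B21 + A13 * B31) (A11 * B12 + A12 * B22 + A13 * B32)
          (A11 * B13 + A12 * B23 + A13 * B33)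
          (A21 * B11 + A22 * B21 + A23 * B31) (A21 * B12 + A22 * B22 + A23 * B32)
          (A21 * B13 + A22 * B23 + A23 * B33)
          (A31 * B11 + A32 * B21 + A33 * B31) (A31 * B12 + A32 * B22 + A33 * B32)
          (A31 * B13 + A32 * B23 + A33 * B33) := by
  ext (i | i | i) (j | j | j) <;>
    simp [blk3, mul_apply, Fintype.sum_sum_type, add_assoc]

theorem blk3_one [DecidableEq n] [DecidableEq m] [DecidableEq p] [Semiring α] :
    blk3 (1 : Matrix n n α) 0 0 0 (1 : Matrix m m α) 0 0 0 (1 : Matrix p p α) = 1 := by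
  simp only [blk3, fromCols_zero, fromRows_zero, fromBlocks_one]

theorem blk3_sub [Sub α]
    (A11 : Matrix n n α) (A12 : Matrix n m α) (A13 : Matrix n p α)
    (A21 : Matrix m n α) (A22 : Matrix m m α) (A23 : Matrix m p α)
    (A31 : Matrix p n α) (A32 : Matrix p m α) (A33 : Matrix p p α)
    (B11 : Matrix n n α) (B12 : Matrix n m α) (B13 : Matrix n p α)
    (B21 : Matrix m n α) (B22 : Matrix m m α) (B23 : Matrix m p α)
    (B31 : Matrix p n α) (B32 : Matrix p m α) (B33 : Matrix p p α) :
    blk3 A11 A12 A13 A21 A22 A23 A31 A32 A33 - blk3 B11 B12 B13 B21 B22 B23 B31 B32 B33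
      = blk3 (A11 - B11) (A12 - B12) (A13 - B13) (A21 - B21) (A22 - B22) (A23 - B23)
          (A31 - B31) (A32 - B32) (A33 - B33) := by
  ext (i | i | i) (j | j | j) <;> rfl

theorem one_sub_blk3_realization [Fintype n] [DecidableEq n] [DecidableEq m] [CommRing α]
    (z : α) (A : Matrix n n α) (B : Matrix n m α) (P : Matrix n n α) (M : Matrix m n α) :
    1 - blk3 (A + (1 - z) • 1) B 0 0 0 (z • M) 1 0 (1 - z • P)
      = blk3 (z • 1 - A) (-B) 0 0 1 (-(z • M)) (-1) 0 (z • P) := by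
  rw [← blk3_one, blk3_sub]
  congr 1 <;> module

theorem blk3_mul_blk3_eq_one [Fintype n] [Fintype m] [DecidableEq n] [DecidableEq m] [Ring α]
    (zA : Matrix n n α) (B : Matrix n m α) (P : Matrix n n α) (M : Matrix m n α)
    (Φx : Matrix n n α) (Φu : Matrix m n α) (Γ : Matrix n n α)
    (hx : Φx * (zA * P - B * M) = P) (hu : Φu * (zA * P - B * M) = M)
    (hΓ : Γ * (zA * P - B * M) = 1) :
    blk3 Φx (Φx * B) (Φx * zA - 1) Φu (1 + Φu * B) (Φu * zA) Γ (Γ * B) (Γ * zA)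
      * blk3 zA (-B) 0 0 1 (-M) (-1) 0 P = 1 := by
  rw [Matrix.mul_sub] at hx hu hΓ
  rw [blk3_mul, ← blk3_one]
  congr 1 <;> simp only [Matrix.sub_mul, Matrix.add_mul, Matrix.mul_neg, Matrix.mul_zero,
    Matrix.mul_one, Matrix.one_mul, Matrix.mul_assoc]
  · abel
  · abel
  · linear_combination (norm := abel) hx
  · abel
  · abel
  · linear_combination (norm := abel) hu
  · abel
  · abel
  · linear_combination (norm := abel) hΓ

end BlockAlgebra

theorem design_separation_sufficiency_general {n m : Type*} [Fintype n] [Fintype m]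
    [DecidableEq n] [DecidableEq m]
    (A : Matrix n n ℝ) (B : Matrix n m ℝ)
    (Pc : Matrix n n (RatFunc ℝ)) (Mc : Matrix m n (RatFunc ℝ))
    (Φx : Matrix n n (RatFunc ℝ)) (Φu : Matrix m n (RatFunc ℝ))
    (zA : Matrix n n (RatFunc ℝ))
    (hzA : zA = (RatFunc.X : RatFunc ℝ) • (1 : Matrix n n (RatFunc ℝ))
        - A.map (algebraMap ℝ (RatFunc ℝ)))
    (Δc : Matrix n n (RatFunc ℝ))
    (hΔc : Δc = zA * Pc - B.map (algebraMap ℝ (RatFunc ℝ)) * Mc)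
    (hΔcInv : IsUnit Δc.det)
    (hPc : Φx * Δc = Pc) (hMc : Φu * Δc = Mc)
    (R S : Matrix (n ⊕ (m ⊕ n)) (n ⊕ (m ⊕ n)) (RatFunc ℝ))
    (hR : R = blk3
      (A.map (algebraMap ℝ (RatFunc ℝ))
        + (1 - (RatFunc.X : RatFunc ℝ)) • (1 : Matrix n n (RatFunc ℝ)))
      (B.map (algebraMap ℝ (RatFunc ℝ))) 0
      0 0 ((RatFunc.X : RatFunc ℝ) • Mc)
      (1 : Matrix n n (RatFunc ℝ)) 0
      ((1 : Matrix n n (RatFunc ℝ)) - (RatFunc.X : RatFunc ℝ) • Pc))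
    (hS : S = blk3
      Φx (Φx * B.map (algebraMap ℝ (RatFunc ℝ))) (Φx * zA - 1)
      Φu (1 + Φu * B.map (algebraMap ℝ (RatFunc ℝ))) (Φu * zA)
      ((RatFunc.X : RatFunc ℝ)⁻¹ • Δc⁻¹)
      ((RatFunc.X : RatFunc ℝ)⁻¹ • (Δc⁻¹ * B.map (algebraMap ℝ (RatFunc ℝ))))
      ((RatFunc.X : RatFunc ℝ)⁻¹ • (Δc⁻¹ * zA))) :
    S * (1 - R) = 1 := by
  set z : RatFunc ℝ := RatFunc.X
  set B' := B.map (algebraMap ℝ (RatFunc ℝ))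
  have hscaled : zA * (z • Pc) - B' * (z • Mc) = z • Δc := by
    rw [hΔc, Matrix.mul_smul, Matrix.mul_smul, smul_sub]
  rw [hR, one_sub_blk3_realization, ← hzA, hS, ← Matrix.smul_mul, ← Matrix.smul_mul]
  apply blk3_mul_blk3_eq_one <;> rw [hscaled, Matrix.mul_smul]
  · rw [hPc]
  · rw [hMc]
  · rw [Matrix.smul_mul, smul_smul, mul_inv_cancel₀ RatFunc.X_ne_zero, one_smul,
      Matrix.nonsing_inv_mul _ hΔcInv]

/-- Closed-loop design separation (sufficiency): if `(zI - A) Φx - B Φu = I` and the pair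
`(P_c, M_c)` satisfies `Φx Δ_c = P_c`, `Φu Δ_c = M_c` with `Δ_c = (zI - A) P_c - B M_c`
invertible, then
`S = [[Φx, Φx B, Φx(zI - A) - I],[Φu, I + Φu B, Φu(zI - A)],[z⁻¹Δ_c⁻¹, z⁻¹Δ_c⁻¹B, z⁻¹Δ_c⁻¹(zI - A)]]`
satisfies `S (I - R) = I` for `R = [[A + (1-z)I, B, 0],[0, 0, zM_c],[I, 0, I - zP_c]]`. -/
theorem design_separation_sufficiency {n m : Type*} [Fintype n] [Fintype m]
    [DecidableEq n] [DecidableEq m]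
    (A : Matrix n n ℝ) (B : Matrix n m ℝ)
    (Pc : Matrix n n (RatFunc ℝ)) (Mc : Matrix m n (RatFunc ℝ))
    (Φx : Matrix n n (RatFunc ℝ)) (Φu : Matrix m n (RatFunc ℝ))
    (zA : Matrix n n (RatFunc ℝ))
    (hzA : zA = (RatFunc.X : RatFunc ℝ) • (1 : Matrix n n (RatFunc ℝ))
        - A.map (algebraMap ℝ (RatFunc ℝ)))
    (haffine : zA * Φx - (B.map (algebraMap ℝ (RatFunc ℝ))) * Φu = 1)
    (Δc : Matrix n n (RatFunc ℝ))
    (hΔc : Δc = zA * Pc - B.map (algebraMap ℝ (RatFunc ℝ)) * Mc)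
    (hΔcInv : IsUnit Δc.det)
    (hPc : Φx * Δc = Pc) (hMc : Φu * Δc = Mc)
    (R S : Matrix (n ⊕ (m ⊕ n)) (n ⊕ (m ⊕ n)) (RatFunc ℝ))
    (hR : R = blk3
      (A.map (algebraMap ℝ (RatFunc ℝ))
        + (1 - (RatFunc.X : RatFunc ℝ)) • (1 : Matrix n n (RatFunc ℝ)))
      (B.map (algebraMap ℝ (RatFunc ℝ))) 0
      0 0 ((RatFunc.X : RatFunc ℝ) • Mc)
      (1 : Matrix n n (RatFunc ℝ)) 0
      ((1 : Matrix n n (RatFunc ℝ)) - (RatFunc.X : RatFunc ℝ) • Pc))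
    (hS : S = blk3
      Φx (Φx * B.map (algebraMap ℝ (RatFunc ℝ))) (Φx * zA - 1)
      Φu (1 + Φu * B.map (algebraMap ℝ (RatFunc ℝ))) (Φu * zA)
      ((RatFunc.X : RatFunc ℝ)⁻¹ • Δc⁻¹)
      ((RatFunc.X : RatFunc ℝ)⁻¹ • (Δc⁻¹ * B.map (algebraMap ℝ (RatFunc ℝ))))
      ((RatFunc.X : RatFunc ℝ)⁻¹ • (Δc⁻¹ * zA))) :
    S * (1 - R) = 1 :=
  design_separation_sufficiency_general A B Pc Mc Φx Φu zA hzA Δc hΔc hΔcInv hPc hMc R S hR hS
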